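/- Let ψ ∈ L²(ℝ^ν), ψ ≠ 0, and ε > 0 with ‖𝟙_{|x| ≥ 2ε} ψ‖ > 0. For α > 0, 0 < β < 1, set ψ_F = e^{α⟨x⟩^β} ψ ∈ L² and Ψ_α = ψ_F/‖ψ_F‖. Then there exist constants C₁ > 0 and α₀ > 0 such that for all α ≥ α₀, ⟨Ψ_α, (1 - ⟨q⟩^{-2}) Ψ_α⟩ ≥ C₁. -/

import Mathlib

open MeasureTheory Real

noncomputable section

/-! The weight `exp (2α⟨x⟩^β)` relating `‖ψ_F‖²` to `‖ψ‖²` is radially increasing, so it can only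
shift mass outward: the fraction of `‖ψ_F‖²` carried by `{2ε ≤ ‖x‖}` is at least the corresponding
fraction for `ψ`, for every `α > 0`. On that region `1 - ⟨x⟩⁻² ≥ 1 - ⟨2ε⟩⁻²`, so
`C₁ = (1 - ⟨2ε⟩⁻²) ‖𝟙_{2ε ≤ ‖x‖} ψ‖² / ‖ψ‖²` works with any `α₀ > 0`. -/

/-- Japanese bracket ⟨x⟩ = (1+|x|²)^{1/2}. -/
def jap {ν : ℕ} (x : EuclideanSpace ℝ (Fin ν)) : ℝ := Real.sqrt (1 + ‖x‖ ^ 2)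

theorem div_add_le_div_add_of_le_mul {a b t x e : ℝ} (ha : 0 ≤ a) (hb : 0 ≤ b) (hx : 0 ≤ x)
    (he : 0 < e) (hxa : x ≤ e * a) (hbt : e * b ≤ t) : b / (b + a) ≤ t / (t + x) := by
  rcases hb.eq_or_lt with rfl | hb
  · have ht : 0 ≤ t := by linarith
    simpa using div_nonneg ht (add_nonneg ht hx)
  · have ht : 0 < t := lt_of_lt_of_le (mul_pos he hb) hbt
    rw [div_le_div_iff₀ (by linarith) (by linarith)]
    nlinarith [mul_le_mul_of_nonneg_left hxa hb.le, mul_le_mul_of_nonneg_right hbt ha]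

section Reweighting

variable {X : Type*} [MeasurableSpace X] {μ : Measure X} {S : Set X}

theorem setIntegral_div_integral_le_of_weight {f w : X → ℝ} {e : ℝ} (hS : MeasurableSet S)
    (hf0 : 0 ≤ f) (hf : Integrable f μ) (hwf : Integrable (fun x => w x * f x) μ)
    (hw0 : 0 ≤ w) (he : 0 < e) (hwS : ∀ x ∈ S, e ≤ w x) (hwSc : ∀ x ∈ Sᶜ, w x ≤ e) :
    (∫ x in S, f x ∂μ) / ∫ x, f x ∂μ ≤ (∫ x in S, w x * f x ∂μ) / ∫ x, w x * f x ∂μ := by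
  rw [← integral_add_compl hS hf, ← integral_add_compl hS hwf]
  refine div_add_le_div_add_of_le_mul (setIntegral_nonneg hS.compl fun x _ => hf0 x)
    (setIntegral_nonneg hS fun x _ => hf0 x)
    (setIntegral_nonneg hS.compl fun x _ => mul_nonneg (hw0 x) (hf0 x)) he ?_ ?_
  · rw [← integral_const_mul]
    exact setIntegral_mono_on hwf.integrableOn (hf.const_mul e).integrableOn hS.compl
      fun x hx => mul_le_mul_of_nonneg_right (hwSc x hx) (hf0 x)
  · rw [← integral_const_mul]
    exact setIntegral_mono_on (hf.const_mul e).integrableOn hwf.integrableOn hS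
      fun x hx => mul_le_mul_of_nonneg_right (hwS x hx) (hf0 x)

theorem mul_setIntegral_le_integral_mul {g v : X → ℝ} {c : ℝ} (hS : MeasurableSet S)
    (hg0 : 0 ≤ g) (hg : Integrable g μ) (hvg : Integrable (fun x => v x * g x) μ) (hv0 : 0 ≤ v)
    (hvS : ∀ x ∈ S, c ≤ v x) :
    c * ∫ x in S, g x ∂μ ≤ ∫ x, v x * g x ∂μ :=
  calc c * ∫ x in S, g x ∂μ = ∫ x in S, c * g x ∂μ := (integral_const_mul c _).symm
    _ ≤ ∫ x in S, v x * g x ∂μ :=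
      setIntegral_mono_on (hg.const_mul c).integrableOn hvg.integrableOn hS
        fun x hx => mul_le_mul_of_nonneg_right (hvS x hx) (hg0 x)
    _ ≤ ∫ x, v x * g x ∂μ :=
      setIntegral_le_integral hvg (.of_forall fun x => mul_nonneg (hv0 x) (hg0 x))

end Reweighting

theorem one_sub_inv_one_add_sq_nonneg (t : ℝ) : 0 ≤ 1 - (1 + t ^ 2)⁻¹ :=
  sub_nonneg.2 (inv_le_one_of_one_le₀ (by nlinarith))

section Radial

variable {E : Type*} [NormedAddCommGroup E] [MeasurableSpace E] [OpensMeasurableSpace E]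
  {μ : Measure E} {r : ℝ}

theorem setIntegral_div_integral_le_of_monotoneOn_norm {f : E → ℝ} {φ : ℝ → ℝ} (hr : 0 ≤ r)
    (hφ : MonotoneOn φ (Set.Ici 0)) (hφ0 : ∀ t, 0 ≤ φ t) (hφr : 0 < φ r) (hf0 : 0 ≤ f)
    (hf : Integrable f μ) (hφf : Integrable (fun x => φ ‖x‖ * f x) μ) :
    (∫ x in {x | r ≤ ‖x‖}, f x ∂μ) / ∫ x, f x ∂μ ≤
      (∫ x in {x | r ≤ ‖x‖}, φ ‖x‖ * f x ∂μ) / ∫ x, φ ‖x‖ * f x ∂μ :=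
  setIntegral_div_integral_le_of_weight (measurableSet_le measurable_const measurable_norm) hf0 hf
    hφf (fun _ => hφ0 _) hφr (fun x (hx : r ≤ ‖x‖) => hφ hr (norm_nonneg x) hx)
    fun x (hx : ¬r ≤ ‖x‖) => hφ (norm_nonneg x) hr (not_le.1 hx).le

theorem mul_setIntegral_le_integral_one_sub_inv_one_add_sq_mul {g : E → ℝ} (hr : 0 ≤ r)
    (hg0 : 0 ≤ g) (hg : Integrable g μ) :
    (1 - (1 + r ^ 2)⁻¹) * ∫ x in {x | r ≤ ‖x‖}, g x ∂μ ≤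
      ∫ x, (1 - (1 + ‖x‖ ^ 2)⁻¹) * g x ∂μ := by
  refine mul_setIntegral_le_integral_mul (measurableSet_le measurable_const measurable_norm) hg0 hg
    (hg.bdd_mul (c := 1) (by fun_prop) (.of_forall fun x => ?_))
    (fun x => one_sub_inv_one_add_sq_nonneg _) fun x (hx : r ≤ ‖x‖) => by gcongr
  rw [norm_of_nonneg (one_sub_inv_one_add_sq_nonneg _)]
  exact sub_le_self _ (by positivity)

end Radial

theorem monotoneOn_exp_mul_sqrt_one_add_sq_rpow {a β : ℝ} (ha : 0 ≤ a) (hβ : 0 ≤ β) :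
    MonotoneOn (fun t : ℝ => exp (a * sqrt (1 + t ^ 2) ^ β)) (Set.Ici 0) := by
  intro s hs t _ hst
  simp only
  gcongr

theorem norm_ofReal_exp_mul_sq (a : ℝ) (z : ℂ) :
    ‖(exp a : ℂ) * z‖ ^ 2 = exp (2 * a) * ‖z‖ ^ 2 := by
  rw [norm_mul, Complex.norm_real, norm_of_nonneg (exp_pos a).le, mul_pow, ← exp_nat_mul]
  norm_num

theorem lower_bound_weighted_expectation_general {ν : ℕ}
    (ψ : EuclideanSpace ℝ (Fin ν) → ℂ) (hψ : MemLp ψ 2 volume)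
    (ε : ℝ) (hε : 0 < ε)
    (htail : 0 < ∫ x in {x : EuclideanSpace ℝ (Fin ν) | 2 * ε ≤ ‖x‖}, ‖ψ x‖ ^ 2)
    (β : ℝ) (hβ0 : 0 < β)
    (ψF : ℝ → EuclideanSpace ℝ (Fin ν) → ℂ)
    (hψF : ∀ α x, ψF α x = Real.exp (α * (jap x) ^ β) * ψ x)
    (hψFL2 : ∀ α > 0, MemLp (ψF α) 2 volume) :
    ∃ C₁ > 0, ∃ α₀ > 0, ∀ α ≥ α₀,
      C₁ ≤ (∫ x, (1 - ((1 : ℝ) + ‖x‖ ^ 2)⁻¹) * ‖ψF α x‖ ^ 2) /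
        (∫ x, ‖ψF α x‖ ^ 2) := by
  set S : Set (EuclideanSpace ℝ (Fin ν)) := {x | 2 * ε ≤ ‖x‖}
  have hψ2 : Integrable (fun x => ‖ψ x‖ ^ 2) := hψ.integrable_norm_pow two_ne_zero
  set c : ℝ := 1 - (1 + (2 * ε) ^ 2)⁻¹
  have hc : 0 < c := sub_pos.2 (inv_lt_one_of_one_lt₀ (by nlinarith))
  have hmass : 0 < ∫ x, ‖ψ x‖ ^ 2 :=
    htail.trans_le (setIntegral_le_integral hψ2 (.of_forall fun x => by positivity))
  refine ⟨c * ((∫ x in S, ‖ψ x‖ ^ 2) / ∫ x, ‖ψ x‖ ^ 2), by positivity, 1, one_pos,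
    fun α hα => ?_⟩
  have hg : Integrable (fun x => ‖ψF α x‖ ^ 2) :=
    (hψFL2 α (by positivity)).integrable_norm_pow two_ne_zero
  have hψF2 : (fun x => ‖ψF α x‖ ^ 2) =
      fun x => exp (2 * α * sqrt (1 + ‖x‖ ^ 2) ^ β) * ‖ψ x‖ ^ 2 := by
    simp only [hψF, norm_ofReal_exp_mul_sq, jap, mul_assoc]
  calc c * ((∫ x in S, ‖ψ x‖ ^ 2) / ∫ x, ‖ψ x‖ ^ 2)
      ≤ c * ((∫ x in S, ‖ψF α x‖ ^ 2) / ∫ x, ‖ψF α x‖ ^ 2) := by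
        refine mul_le_mul_of_nonneg_left ?_ hc.le
        rw [hψF2]
        exact setIntegral_div_integral_le_of_monotoneOn_norm (r := 2 * ε) (by positivity)
          (monotoneOn_exp_mul_sqrt_one_add_sq_rpow (by positivity) hβ0.le)
          (fun _ => (exp_pos _).le) (exp_pos _) (fun x => by positivity) hψ2 (hψF2 ▸ hg)
    _ = (c * ∫ x in S, ‖ψF α x‖ ^ 2) / ∫ x, ‖ψF α x‖ ^ 2 := (mul_div_assoc _ _ _).symm
    _ ≤ _ := div_le_div_of_nonneg_right
      (mul_setIntegral_le_integral_one_sub_inv_one_add_sq_mul (by positivity)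
        (fun x => by positivity) hg)
      (integral_nonneg fun x => by positivity)

/-- For ψ ≠ 0 in L² with nonvanishing tail, and Ψ_α the normalization of
ψ_F = e^{α⟨x⟩^β}ψ, there are C₁ > 0 and α₀ > 0 such that for all α ≥ α₀,
⟨Ψ_α, (1-⟨q⟩^{-2})Ψ_α⟩ ≥ C₁. -/
theorem lower_bound_weighted_expectation {ν : ℕ}
    (ψ : EuclideanSpace ℝ (Fin ν) → ℂ) (hψ : MemLp ψ 2 volume)
    (hψ0 : ψ ≠ 0) (ε : ℝ) (hε : 0 < ε)
    (htail : 0 < ∫ x in {x : EuclideanSpace ℝ (Fin ν) | 2 * ε ≤ ‖x‖}, ‖ψ x‖ ^ 2)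
    (β : ℝ) (hβ0 : 0 < β) (hβ1 : β < 1)
    (ψF : ℝ → EuclideanSpace ℝ (Fin ν) → ℂ)
    (hψF : ∀ α x, ψF α x = Real.exp (α * (jap x) ^ β) * ψ x)
    (hψFL2 : ∀ α > 0, MemLp (ψF α) 2 volume) :
    ∃ C₁ > 0, ∃ α₀ > 0, ∀ α ≥ α₀,
      C₁ ≤ (∫ x, (1 - ((1 : ℝ) + ‖x‖ ^ 2)⁻¹) * ‖ψF α x‖ ^ 2) /
        (∫ x, ‖ψF α x‖ ^ 2) :=
  lower_bound_weighted_expectation_general ψ hψ ε hε htail β hβ0 ψF hψF hψFL2
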